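/- Let κ_1^0 < κ_2^0 < κ_3^0 be real numbers, and define Y_b(T) = (2κ_1^0 + κ_3^0) T and Y_a(T) = (2κ_2^0 + κ_3^0) T. Define κ_1 : ℝ × (0,∞) → ℝ by κ_1(Y,T) = κ_1^0 for Y ≤ Y_b(T), κ_1(Y,T) = (Y − κ_3^0 T)/(2T) for Y_b(T) ≤ Y ≤ Y_a(T), κ_1(Y,T) = κ_2^0 for Y ≥ Y_a(T), and define κ_2(Y,T) = κ_3^0 for all (Y,T). Then (i) κ_1 is continuous on ℝ × (0,∞); (ii) at every point with Y ≠ Y_b(T) and Y ≠ Y_a(T), the pair (κ_1, κ_2) satisfies the κ-system ∂_T κ_1 + (2κ_1 + κ_2) ∂_Y κ_1 = 0 and ∂_T κ_2 + (κ_1 + 2κ_2) ∂_Y κ_2 = 0; (iii) for every Y ≠ 0, κ_1(Y,T) → κ_1^0 as T → 0+ if Y < 0 and κ_1(Y,T) → κ_2^0 as T → 0+ if Y > 0. -/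

import Mathlib

/-- The rarefaction-wave component `κ₁` for the case (a) V-shape initial data. -/
noncomputable def kappa1a (k1 k2 k3 : ℝ) (Y T : ℝ) : ℝ :=
  if Y ≤ (2 * k1 + k3) * T then k1
  else if Y ≤ (2 * k2 + k3) * T then (Y - k3 * T) / (2 * T)
  else k2

lemma kappa1a_eq_maxmin (k1 k2 k3 : ℝ) (h12 : k1 < k2) {Y T : ℝ} (hT : 0 < T) :
    kappa1a k1 k2 k3 Y T = max k1 (min k2 ((Y - k3 * T) / (2 * T))) := by
  have h2T : 0 < 2 * T := by linarith
  unfold kappa1a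
  by_cases hb : Y ≤ (2 * k1 + k3) * T
  · have hx : (Y - k3 * T) / (2 * T) ≤ k1 := by
      rw [div_le_iff₀ h2T]; nlinarith
    rw [if_pos hb, max_eq_left (le_trans (min_le_right _ _) hx)]
  · rw [if_neg hb]
    push_neg at hb
    have hx1 : k1 < (Y - k3 * T) / (2 * T) := by
      rw [lt_div_iff₀ h2T]; nlinarith
    by_cases ha : Y ≤ (2 * k2 + k3) * T
    · have hx2 : (Y - k3 * T) / (2 * T) ≤ k2 := by
        rw [div_le_iff₀ h2T]; nlinarith
      rw [if_pos ha, min_eq_right hx2, max_eq_right hx1.le]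
    · push_neg at ha
      have hx2 : k2 ≤ (Y - k3 * T) / (2 * T) := by
        rw [le_div_iff₀ h2T]; nlinarith
      rw [if_neg (not_le.mpr ha), min_eq_left hx2, max_eq_right h12.le]

/-- The pair `(κ₁, κ₂)` with `κ₁` the rarefaction wave and `κ₂ ≡ κ₃⁰` is a
global solution of the κ-system with the case (a) V-shape step initial data. -/
theorem case_a_global_solution (k1 k2 k3 : ℝ) (h12 : k1 < k2) (h23 : k2 < k3) :
    ContinuousOn (fun p : ℝ × ℝ => kappa1a k1 k2 k3 p.1 p.2)
      {p : ℝ × ℝ | 0 < p.2} ∧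
    (∀ Y T : ℝ, 0 < T → Y ≠ (2 * k1 + k3) * T → Y ≠ (2 * k2 + k3) * T →
      deriv (fun T' : ℝ => kappa1a k1 k2 k3 Y T') T
        + (2 * kappa1a k1 k2 k3 Y T + k3) *
            deriv (fun Y' : ℝ => kappa1a k1 k2 k3 Y' T) Y = 0 ∧
      deriv (fun _ : ℝ => k3) T
        + (kappa1a k1 k2 k3 Y T + 2 * k3) * deriv (fun _ : ℝ => k3) Y = 0) ∧
    (∀ Y : ℝ, Y < 0 →
      Filter.Tendsto (fun T : ℝ => kappa1a k1 k2 k3 Y T)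
        (nhdsWithin 0 (Set.Ioi 0)) (nhds k1)) ∧
    (∀ Y : ℝ, 0 < Y →
      Filter.Tendsto (fun T : ℝ => kappa1a k1 k2 k3 Y T)
        (nhdsWithin 0 (Set.Ioi 0)) (nhds k2)) := by
  refine ⟨?_, ?_, ?_, ?_⟩
  · -- continuity
    have hcont : ContinuousOn
        (fun p : ℝ × ℝ => max k1 (min k2 ((p.1 - k3 * p.2) / (2 * p.2))))
        {p : ℝ × ℝ | 0 < p.2} := by
      apply ContinuousOn.sup continuousOn_const
      apply ContinuousOn.inf continuousOn_const
      exact ContinuousOn.div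
        ((continuous_fst.sub (continuous_const.mul continuous_snd)).continuousOn)
        ((continuous_const.mul continuous_snd).continuousOn)
        (fun p hp => by have : (0:ℝ) < p.2 := hp; positivity)
    exact hcont.congr fun p hp => kappa1a_eq_maxmin k1 k2 k3 h12 hp
  · -- PDE
    intro Y T hT hb ha
    refine ⟨?_, by simp⟩
    by_cases hYb : Y ≤ (2 * k1 + k3) * T
    · have hYb' : Y < (2 * k1 + k3) * T := lt_of_le_of_ne hYb hb
      have hdT : deriv (fun T' : ℝ => kappa1a k1 k2 k3 Y T') T = 0 := by
        have hev : (fun T' : ℝ => kappa1a k1 k2 k3 Y T') =ᶠ[nhds T] fun _ => k1 := by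
          have : ∀ᶠ T' in nhds T, Y < (2 * k1 + k3) * T' :=
            (isOpen_lt continuous_const (continuous_const.mul continuous_id)).eventually_mem hYb'
          filter_upwards [this] with T' hT'
          simp [kappa1a, hT'.le]
        rw [hev.deriv_eq, deriv_const]
      have hdY : deriv (fun Y' : ℝ => kappa1a k1 k2 k3 Y' T) Y = 0 := by
        have hev : (fun Y' : ℝ => kappa1a k1 k2 k3 Y' T) =ᶠ[nhds Y] fun _ => k1 := by
          have : ∀ᶠ Y' in nhds Y, Y' < (2 * k1 + k3) * T :=
            eventually_lt_nhds hYb'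
          filter_upwards [this] with Y' hY'
          simp [kappa1a, hY'.le]
        rw [hev.deriv_eq, deriv_const]
      rw [hdT, hdY]; ring
    · push_neg at hYb
      by_cases hYa : Y ≤ (2 * k2 + k3) * T
      · have hYa' : Y < (2 * k2 + k3) * T := lt_of_le_of_ne hYa ha
        have hval : kappa1a k1 k2 k3 Y T = (Y - k3 * T) / (2 * T) := by
          simp [kappa1a, not_le.mpr hYb, hYa]
        have hdT : deriv (fun T' : ℝ => kappa1a k1 k2 k3 Y T') T = -Y / (2 * T ^ 2) := by
          have hev : (fun T' : ℝ => kappa1a k1 k2 k3 Y T')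
              =ᶠ[nhds T] fun T' => (Y - k3 * T') / (2 * T') := by
            have h1 : ∀ᶠ T' in nhds T, (2 * k1 + k3) * T' < Y :=
              (isOpen_lt (continuous_const.mul continuous_id) continuous_const).eventually_mem hYb
            have h2 : ∀ᶠ T' in nhds T, Y < (2 * k2 + k3) * T' :=
              (isOpen_lt continuous_const (continuous_const.mul continuous_id)).eventually_mem hYa'
            filter_upwards [h1, h2] with T' h1 h2
            simp [kappa1a, not_le.mpr h1, h2.le]
          rw [hev.deriv_eq]
          have hd : HasDerivAt (fun T' : ℝ => (Y - k3 * T') / (2 * T'))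
              ((-k3 * (2 * T) - (Y - k3 * T) * 2) / (2 * T) ^ 2) T := by
            have h1 : HasDerivAt (fun T' : ℝ => Y - k3 * T') (-k3) T := by
              simpa using ((hasDerivAt_id T).const_mul k3).const_sub Y
            have h2 : HasDerivAt (fun T' : ℝ => 2 * T') 2 T := by
              simpa using (hasDerivAt_id T).const_mul (2:ℝ)
            exact h1.div h2 (by positivity)
          rw [hd.deriv]
          field_simp
          ring
        have hdY : deriv (fun Y' : ℝ => kappa1a k1 k2 k3 Y' T) Y = 1 / (2 * T) := by
          have hev : (fun Y' : ℝ => kappa1a k1 k2 k3 Y' T)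
              =ᶠ[nhds Y] fun Y' => (Y' - k3 * T) / (2 * T) := by
            have h1 : ∀ᶠ Y' in nhds Y, (2 * k1 + k3) * T < Y' := eventually_gt_nhds hYb
            have h2 : ∀ᶠ Y' in nhds Y, Y' < (2 * k2 + k3) * T := eventually_lt_nhds hYa'
            filter_upwards [h1, h2] with Y' h1 h2
            simp [kappa1a, not_le.mpr h1, h2.le]
          rw [hev.deriv_eq]
          have hd : HasDerivAt (fun Y' : ℝ => (Y' - k3 * T) / (2 * T)) (1 / (2 * T)) Y := by
            simpa using ((hasDerivAt_id Y).sub (hasDerivAt_const Y (k3 * T))).div_const (2 * T)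
          exact hd.deriv
        rw [hdT, hdY, hval]
        field_simp
        ring
      · push_neg at hYa
        have hYb2 : (2 * k1 + k3) * T < Y := hYb
        have hdT : deriv (fun T' : ℝ => kappa1a k1 k2 k3 Y T') T = 0 := by
          have hev : (fun T' : ℝ => kappa1a k1 k2 k3 Y T') =ᶠ[nhds T] fun _ => k2 := by
            have h1 : ∀ᶠ T' in nhds T, (2 * k1 + k3) * T' < Y :=
              (isOpen_lt (continuous_const.mul continuous_id) continuous_const).eventually_mem hYb2
            have h2 : ∀ᶠ T' in nhds T, (2 * k2 + k3) * T' < Y :=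
              (isOpen_lt (continuous_const.mul continuous_id) continuous_const).eventually_mem hYa
            filter_upwards [h1, h2] with T' h1 h2
            simp [kappa1a, not_le.mpr h1, not_le.mpr h2]
          rw [hev.deriv_eq, deriv_const]
        have hdY : deriv (fun Y' : ℝ => kappa1a k1 k2 k3 Y' T) Y = 0 := by
          have hev : (fun Y' : ℝ => kappa1a k1 k2 k3 Y' T) =ᶠ[nhds Y] fun _ => k2 := by
            have h1 : ∀ᶠ Y' in nhds Y, (2 * k1 + k3) * T < Y' := eventually_gt_nhds hYb2
            have h2 : ∀ᶠ Y' in nhds Y, (2 * k2 + k3) * T < Y' := eventually_gt_nhds hYa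
            filter_upwards [h1, h2] with Y' h1 h2
            simp [kappa1a, not_le.mpr h1, not_le.mpr h2]
          rw [hev.deriv_eq, deriv_const]
        rw [hdT, hdY]; ring
  · -- limit Y < 0
    intro Y hY
    apply Filter.Tendsto.congr' _ tendsto_const_nhds
    have htd : Filter.Tendsto (fun T : ℝ => (2 * k1 + k3) * T)
        (nhdsWithin 0 (Set.Ioi 0)) (nhds 0) := by
      have h : Continuous (fun T : ℝ => (2 * k1 + k3) * T) :=
        continuous_const.mul continuous_id
      simpa using (h.tendsto 0).mono_left nhdsWithin_le_nhds
    filter_upwards [htd.eventually (eventually_gt_nhds hY)] with T hT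
    simp [kappa1a, hT.le]
  · -- limit Y > 0
    intro Y hY
    apply Filter.Tendsto.congr' _ tendsto_const_nhds
    have htd : Filter.Tendsto (fun T : ℝ => (2 * k2 + k3) * T)
        (nhdsWithin 0 (Set.Ioi 0)) (nhds 0) := by
      have h : Continuous (fun T : ℝ => (2 * k2 + k3) * T) :=
        continuous_const.mul continuous_id
      simpa using (h.tendsto 0).mono_left nhdsWithin_le_nhds
    filter_upwards [htd.eventually (eventually_lt_nhds hY), self_mem_nhdsWithin]
      with T h2 hTpos
    have h1 : (2 * k1 + k3) * T < Y := by
      have : (2 * k1 + k3) * T < (2 * k2 + k3) * T := by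
        apply mul_lt_mul_of_pos_right _ hTpos; linarith
      linarith
    simp [kappa1a, not_le.mpr h1, not_le.mpr h2]
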